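/- arXiv:2602.01260 — 4 statements merged into one kernel-verified Lean document; each statement's English description precedes it below -/
import Mathlib

section
/- Let S be a measurable space, γ ∈ [0,1), P and P' Markov kernels from S to S, and r, r' : S → ℝ bounded measurable reward functions. Define value functions V(s) = Σ_{t=0}^∞ γ^t ∫ r(s') (P^t)(s, ds') and V'(s) = Σ_{t=0}^∞ γ^t ∫ r'(s') (P'^t)(s, ds'), where P^t denotes the t-fold composition of the kernel P (with P^0 the identity kernel), and the Bellman operator (T' f)(s) = r'(s) + γ ∫ f(s') P'(s, ds'). Let ρ be a probability measure on S, set J = ∫ V dρ and J' = ∫ V' dρ, and let d_ρ be the discounted state-visitation measure d_ρ = (1−γ)·Σ_{t=0}^∞ γ^t · (ρ pushed forward through t steps of P'). Then J' − J = (1/(1−γ)) · ∫ ( (T' V)(s) − V(s) ) d_ρ(ds). -/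
/-! Let `μₜ = ρ.bind (P'^t)` be the law at time `t` of the `P'`-chain started from `ρ`, so that
`J' = Σ γᵗ ∫ r' dμₜ` and `μₜ₊₁ = μₜ.bind P'`. For every bounded measurable `f`,
`∫ (T' f − f) dμₜ = ∫ r' dμₜ + γ ∫ f dμₜ₊₁ − ∫ f dμₜ`, so after weighting by `γᵗ` and summing,
the `f`-terms telescope and `Σ γᵗ ∫ (T' f − f) dμₜ = J' − ∫ f dρ`. Taking `f = V` gives `J' − J`,
and the left-hand side is `(1 − γ)⁻¹ ∫ (T' V − V) d d_ρ`. -/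

open MeasureTheory ProbabilityTheory

/-- `t`-fold composition of a Markov kernel, with `kiter P 0` the identity kernel. -/
noncomputable def kiter {S : Type*} [MeasurableSpace S] (P : Kernel S S) : ℕ → Kernel S S
  | 0 => Kernel.id
  | n + 1 => (kiter P n).comp P

/-- Discounted value function `V(s) = Σ_t γ^t ∫ r dP^t(s,·)`. -/
noncomputable def valueFn {S : Type*} [MeasurableSpace S] (γ : ℝ) (P : Kernel S S)
    (r : S → ℝ) : S → ℝ :=
  fun s => ∑' t : ℕ, γ ^ t * ∫ s', r s' ∂((kiter P t) s)

/-- Discounted state-visitation measure `d_ρ = (1-γ) Σ_t γ^t (ρ pushed through t steps of P)`. -/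
noncomputable def dvisit {S : Type*} [MeasurableSpace S] (γ : ℝ) (P : Kernel S S)
    (ρ : Measure S) : Measure S :=
  ENNReal.ofReal (1 - γ) • Measure.sum (fun t : ℕ => ENNReal.ofReal (γ ^ t) • ρ.bind (kiter P t))

lemma Summable.hasSum_succ_sub {G : Type*} [AddCommGroup G] [TopologicalSpace G]
    [IsTopologicalAddGroup G] {g : ℕ → G} (hg : Summable g) :
    HasSum (fun n => g (n + 1) - g n) (-g 0) := by
  have h := ((hasSum_nat_add_iff' 1).2 hg.hasSum).sub hg.hasSum
  rwa [Finset.sum_range_one, sub_sub_cancel_left] at h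

section Geometric

variable {γ C : ℝ} {a : ℕ → ℝ}

lemma abs_pow_mul_le (hγ0 : 0 ≤ γ) {x : ℝ} (hx : |x| ≤ C) (t : ℕ) : |γ ^ t * x| ≤ γ ^ t * C := by
  rw [abs_mul, abs_of_nonneg (pow_nonneg hγ0 t)]
  exact mul_le_mul_of_nonneg_left hx (pow_nonneg hγ0 t)

lemma summable_pow_mul_of_abs_le (hγ0 : 0 ≤ γ) (hγ1 : γ < 1) (ha : ∀ t, |a t| ≤ C) :
    Summable fun t => γ ^ t * a t :=
  ((summable_geometric_of_lt_one hγ0 hγ1).mul_right C).of_norm_bounded fun t =>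
    (Real.norm_eq_abs _).trans_le (abs_pow_mul_le hγ0 (ha t) t)

lemma abs_tsum_pow_mul_le (hγ0 : 0 ≤ γ) (hγ1 : γ < 1) (ha : ∀ t, |a t| ≤ C) :
    |∑' t, γ ^ t * a t| ≤ C / (1 - γ) := by
  have hgeom := (summable_geometric_of_lt_one hγ0 hγ1).mul_right C
  have hsum := (summable_pow_mul_of_abs_le hγ0 hγ1 ha).norm
  rw [← Real.norm_eq_abs]
  calc ‖∑' t, γ ^ t * a t‖ ≤ ∑' t, ‖γ ^ t * a t‖ := norm_tsum_le_tsum_norm hsum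
    _ ≤ ∑' t, γ ^ t * C :=
        hsum.tsum_le_tsum (fun t => (Real.norm_eq_abs _).trans_le (abs_pow_mul_le hγ0 (ha t) t))
          hgeom
    _ = C / (1 - γ) := by rw [tsum_mul_right, tsum_geometric_of_lt_one hγ0 hγ1, inv_mul_eq_div]

end Geometric

section Measure

variable {α β : Type*} [MeasurableSpace α] [MeasurableSpace β]

lemma abs_integral_le_of_forall_abs_le {μ : Measure α} [IsProbabilityMeasure μ] {f : α → ℝ}
    {C : ℝ} (hf : ∀ x, |f x| ≤ C) : |∫ x, f x ∂μ| ≤ C := by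
  simpa using norm_integral_le_of_norm_le_const (μ := μ)
    (.of_forall fun x => (Real.norm_eq_abs _).trans_le (hf x))

lemma Measurable.integrable_of_abs_le {μ : Measure α} [IsFiniteMeasure μ] {f : α → ℝ} {C : ℝ}
    (hfm : Measurable f) (hf : ∀ x, |f x| ≤ C) : Integrable f μ :=
  .of_bound hfm.aestronglyMeasurable C (.of_forall fun x => (Real.norm_eq_abs _).trans_le (hf x))

lemma MeasureTheory.Measure.integral_bind {μ : Measure α} {κ : Kernel α β} {f : β → ℝ}
    (hf : Integrable f (μ.bind κ)) : ∫ x, f x ∂(μ.bind κ) = ∫ a, ∫ b, f b ∂(κ a) ∂μ := by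
  rw [Measure.comp_eq_comp_const_apply] at hf ⊢
  rw [Kernel.integral_comp hf, Kernel.const_apply]

end Measure

section Kiter

variable {S : Type*} [MeasurableSpace S] (P : Kernel S S)

instance isMarkovKernel_kiter [IsMarkovKernel P] (n : ℕ) : IsMarkovKernel (kiter P n) := by
  induction n with
  | zero => rw [kiter]; infer_instance
  | succ n ih => rw [kiter]; infer_instance

lemma kiter_succ' (n : ℕ) : kiter P (n + 1) = P ∘ₖ kiter P n := by
  induction n with
  | zero => simp [kiter]
  | succ n ih => conv_lhs => rw [kiter, ih, Kernel.comp_assoc, ← kiter]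

lemma bind_kiter_zero (ρ : Measure S) : ρ.bind (kiter P 0) = ρ :=
  Measure.id_comp

lemma bind_kiter_succ (ρ : Measure S) (n : ℕ) :
    ρ.bind (kiter P (n + 1)) = (ρ.bind (kiter P n)).bind P := by
  rw [kiter_succ', ← Measure.comp_assoc]

end Kiter

section ValueFn

variable {S : Type*} [MeasurableSpace S] {γ C : ℝ} {P : Kernel S S} [IsMarkovKernel P] {r : S → ℝ}

lemma hasSum_valueFn (hγ0 : 0 ≤ γ) (hγ1 : γ < 1) (hr : ∀ s, |r s| ≤ C) (s : S) :
    HasSum (fun t => γ ^ t * ∫ s', r s' ∂(kiter P t s)) (valueFn γ P r s) :=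
  (summable_pow_mul_of_abs_le hγ0 hγ1 fun _ => abs_integral_le_of_forall_abs_le hr).hasSum

lemma abs_valueFn_le (hγ0 : 0 ≤ γ) (hγ1 : γ < 1) (hr : ∀ s, |r s| ≤ C) (s : S) :
    |valueFn γ P r s| ≤ C / (1 - γ) :=
  abs_tsum_pow_mul_le hγ0 hγ1 fun _ => abs_integral_le_of_forall_abs_le hr

lemma measurable_valueFn (hγ0 : 0 ≤ γ) (hγ1 : γ < 1) (hrm : Measurable r)
    (hr : ∀ s, |r s| ≤ C) : Measurable (valueFn γ P r) :=
  measurable_of_tendsto_metrizable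
    (fun _ => Finset.measurable_fun_sum _ fun _ _ =>
      measurable_const.mul hrm.stronglyMeasurable.integral_kernel.measurable)
    (tendsto_pi_nhds.2 fun s => (hasSum_valueFn hγ0 hγ1 hr s).tendsto_sum_nat)

lemma hasSum_integral_valueFn (hγ0 : 0 ≤ γ) (hγ1 : γ < 1) (hrm : Measurable r)
    (hr : ∀ s, |r s| ≤ C) (ρ : Measure S) [IsFiniteMeasure ρ] :
    HasSum (fun t => γ ^ t * ∫ s, r s ∂(ρ.bind (kiter P t))) (∫ s, valueFn γ P r s ∂ρ) := by
  have hterm (t : ℕ) : γ ^ t * ∫ s, r s ∂(ρ.bind (kiter P t))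
      = ∫ s, γ ^ t * ∫ s', r s' ∂(kiter P t s) ∂ρ := by
    rw [Measure.integral_bind (hrm.integrable_of_abs_le hr), integral_const_mul]
  simp_rw [hterm]
  exact hasSum_integral_of_dominated_convergence (fun t _ => γ ^ t * C)
    (fun _ => (measurable_const.mul
      hrm.stronglyMeasurable.integral_kernel.measurable).aestronglyMeasurable)
    (fun t => .of_forall fun s =>
      (Real.norm_eq_abs _).trans_le (abs_pow_mul_le hγ0 (abs_integral_le_of_forall_abs_le hr) t))
    (.of_forall fun _ => (summable_geometric_of_lt_one hγ0 hγ1).mul_right C)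
    (integrable_const _) (.of_forall (hasSum_valueFn hγ0 hγ1 hr))

end ValueFn

section Bellman

variable {S : Type*} [MeasurableSpace S] {γ Cr Cf : ℝ} {P : Kernel S S} {r f : S → ℝ}

noncomputable def bellmanOp (γ : ℝ) (P : Kernel S S) (r f : S → ℝ) : S → ℝ :=
  fun s => r s + γ * ∫ s', f s' ∂(P s)

lemma measurable_bellmanOp (hrm : Measurable r) (hfm : Measurable f) :
    Measurable (bellmanOp γ P r f) :=
  hrm.add (measurable_const.mul hfm.stronglyMeasurable.integral_kernel.measurable)

variable [IsMarkovKernel P]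

lemma abs_bellmanOp_le (hr : ∀ s, |r s| ≤ Cr) (hf : ∀ s, |f s| ≤ Cf) (s : S) :
    |bellmanOp γ P r f s| ≤ Cr + |γ| * Cf :=
  calc |bellmanOp γ P r f s| ≤ |r s| + |γ| * |∫ s', f s' ∂(P s)| :=
        (abs_add_le _ _).trans_eq (by rw [abs_mul])
    _ ≤ Cr + |γ| * Cf := by gcongr; exacts [hr s, abs_integral_le_of_forall_abs_le hf]

lemma integral_bellmanOp (μ : Measure S) [IsFiniteMeasure μ] (hrm : Measurable r)
    (hr : ∀ s, |r s| ≤ Cr) (hfm : Measurable f) (hf : ∀ s, |f s| ≤ Cf) :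
    ∫ s, bellmanOp γ P r f s ∂μ = ∫ s, r s ∂μ + γ * ∫ s, f s ∂(μ.bind P) := by
  have hPf : Integrable (fun s => ∫ s', f s' ∂(P s)) μ :=
    hfm.stronglyMeasurable.integral_kernel.measurable.integrable_of_abs_le
      fun _ => abs_integral_le_of_forall_abs_le hf
  rw [Measure.integral_bind (hfm.integrable_of_abs_le hf), ← integral_const_mul,
    ← integral_add (hrm.integrable_of_abs_le hr) (hPf.const_mul γ)]
  rfl

theorem hasSum_integral_bellmanOp_sub (hγ0 : 0 ≤ γ) (hγ1 : γ < 1) (hrm : Measurable r)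
    (hr : ∀ s, |r s| ≤ Cr) (hfm : Measurable f) (hf : ∀ s, |f s| ≤ Cf)
    (ρ : Measure S) [IsProbabilityMeasure ρ] :
    HasSum (fun t => γ ^ t * ∫ s, (bellmanOp γ P r f s - f s) ∂(ρ.bind (kiter P t)))
      (∫ s, valueFn γ P r s ∂ρ - ∫ s, f s ∂ρ) := by
  set B : ℕ → ℝ := fun t => ∫ s, f s ∂(ρ.bind (kiter P t))
  have hB : Summable fun t => γ ^ t * B t :=
    summable_pow_mul_of_abs_le hγ0 hγ1 fun _ => abs_integral_le_of_forall_abs_le hf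
  have hstep (t : ℕ) : ∫ s, (bellmanOp γ P r f s - f s) ∂(ρ.bind (kiter P t))
      = ∫ s, r s ∂(ρ.bind (kiter P t)) + γ * B (t + 1) - B t := by
    rw [integral_sub ((measurable_bellmanOp hrm hfm).integrable_of_abs_le
      (abs_bellmanOp_le hr hf)) (hfm.integrable_of_abs_le hf),
      integral_bellmanOp _ hrm hr hfm hf, ← bind_kiter_succ]
  have h := (hasSum_integral_valueFn (P := P) hγ0 hγ1 hrm hr ρ).add hB.hasSum_succ_sub
  simp only [B, bind_kiter_zero, pow_zero, one_mul, ← sub_eq_add_neg] at h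
  convert h using 2 with t
  rw [hstep, pow_succ]
  ring

end Bellman

section Visitation

variable {S : Type*} [MeasurableSpace S] {γ : ℝ}

lemma isProbabilityMeasure_dvisit (hγ0 : 0 ≤ γ) (hγ1 : γ < 1) (P : Kernel S S) [IsMarkovKernel P]
    (ρ : Measure S) [IsProbabilityMeasure ρ] : IsProbabilityMeasure (dvisit γ P ρ) := by
  constructor
  have hγ' : ENNReal.ofReal γ < 1 := ENNReal.ofReal_lt_one.2 hγ1
  simp only [dvisit, Measure.smul_apply, Measure.sum_apply _ MeasurableSet.univ, measure_univ,
    smul_eq_mul, mul_one, ENNReal.ofReal_pow hγ0, ENNReal.tsum_geometric]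
  rw [ENNReal.ofReal_sub _ hγ0, ENNReal.ofReal_one]
  exact ENNReal.mul_inv_cancel (tsub_pos_of_lt hγ').ne' (ENNReal.sub_ne_top ENNReal.one_ne_top)

lemma integral_dvisit (hγ0 : 0 ≤ γ) (hγ1 : γ < 1) {P : Kernel S S} {ρ : Measure S} {h : S → ℝ}
    (hh : Integrable h (dvisit γ P ρ)) :
    ∫ s, h s ∂(dvisit γ P ρ) = (1 - γ) * ∑' t, γ ^ t * ∫ s, h s ∂(ρ.bind (kiter P t)) := by
  have hc : ENNReal.ofReal (1 - γ) ≠ 0 := by simpa using hγ1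
  rw [dvisit, integrable_smul_measure hc ENNReal.ofReal_ne_top] at hh
  rw [dvisit, integral_smul_measure, integral_sum_measure hh,
    ENNReal.toReal_ofReal (by linarith), smul_eq_mul]
  congr 1
  refine tsum_congr fun t => ?_
  rw [integral_smul_measure, ENNReal.toReal_ofReal (pow_nonneg hγ0 t), smul_eq_mul]

end Visitation

/-- Performance Difference Lemma: with `J = ∫ V dρ`, `J' = ∫ V' dρ` and
`(T' f)(s) = r'(s) + γ ∫ f dP'(s,·)`, one has
`J' − J = (1/(1−γ)) ∫ ((T' V)(s) − V(s)) d_ρ(ds)` where `d_ρ` is the discounted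
state-visitation measure of `P'` started from `ρ`. -/
theorem stmt4 {S : Type*} [MeasurableSpace S]
    (γ : ℝ) (hγ : γ ∈ Set.Ico (0 : ℝ) 1)
    (P P' : Kernel S S) [IsMarkovKernel P] [IsMarkovKernel P']
    (r r' : S → ℝ) (hrmeas : Measurable r) (hr'meas : Measurable r')
    (Cr : ℝ) (hrbd : ∀ s, |r s| ≤ Cr) (Cr' : ℝ) (hr'bd : ∀ s, |r' s| ≤ Cr')
    (ρ : Measure S) [IsProbabilityMeasure ρ] :
    (∫ s, valueFn γ P' r' s ∂ρ) - ∫ s, valueFn γ P r s ∂ρ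
      = (1 / (1 - γ)) *
        ∫ s, ((r' s + γ * ∫ s', valueFn γ P r s' ∂(P' s)) - valueFn γ P r s)
          ∂(dvisit γ P' ρ) := by
  obtain ⟨hγ0, hγ1⟩ := hγ
  set V := valueFn γ P r
  have hVm : Measurable V := measurable_valueFn hγ0 hγ1 hrmeas hrbd
  have hV : ∀ s, |V s| ≤ Cr / (1 - γ) := abs_valueFn_le hγ0 hγ1 hrbd
  have := isProbabilityMeasure_dvisit hγ0 hγ1 P' ρ
  have hres : Integrable (fun s => bellmanOp γ P' r' V s - V s) (dvisit γ P' ρ) :=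
    ((measurable_bellmanOp hr'meas hVm).sub hVm).integrable_of_abs_le fun s =>
      (abs_sub _ _).trans (add_le_add (abs_bellmanOp_le hr'bd hV s) (hV s))
  change _ = 1 / (1 - γ) * ∫ s, (bellmanOp γ P' r' V s - V s) ∂(dvisit γ P' ρ)
  rw [integral_dvisit hγ0 hγ1 hres,
    (hasSum_integral_bellmanOp_sub hγ0 hγ1 hr'meas hr'bd hVm hV ρ).tsum_eq]
  field_simp
end

section
/- Let k be a positive semidefinite kernel on a set S, let x_1, …, x_T ∈ S and σ > 0, and define the GP posterior variance σ_t²(s) for 0 ≤ t ≤ T as in the context. Then the determinant of the regularized Gram matrix factors over the sequential posterior variances: det( I_T + σ^{−2} K_T ) = Π_{t=1}^{T} ( 1 + σ^{−2} σ_{t−1}²(x_t) ). -/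
/-
Bordering `K_t + σ² I` by the point `x_{t+1}` multiplies its determinant by the Schur complement
of the new diagonal entry, `k(x_{t+1}, x_{t+1}) + σ² − k_t(x_{t+1})ᵀ (K_t + σ² I)⁻¹ k_t(x_{t+1})`,
which is `σ² + σ_t²(x_{t+1})`. Since `K_t + σ² I` is positive definite, the inverse is a genuine
inverse at every stage, so induction gives `det(K_T + σ² I) = ∏ₜ (σ² + σ_{t−1}²(x_t))`;
dividing by `σ^{2T}` gives the claim.
-/

open Matrix

def IsPSDKernel {S : Type*} (k : S → S → ℝ) : Prop :=
  (∀ x y, k x y = k y x) ∧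
    ∀ (n : ℕ) (x : Fin n → S), (Matrix.of fun i j => k (x i) (x j)).PosSemidef

/-- Regularized Gram matrix `K_t + σ² I` of the first `t` points. -/
noncomputable def gramReg {S : Type*} (k : S → S → ℝ) (σ : ℝ) {T : ℕ} (x : Fin T → S)
    (t : ℕ) (ht : t ≤ T) : Matrix (Fin t) (Fin t) ℝ :=
  (Matrix.of fun i j => k (x (Fin.castLE ht i)) (x (Fin.castLE ht j)))
    + σ ^ 2 • (1 : Matrix (Fin t) (Fin t) ℝ)

/-- Kernel vector `k_t(s)` between a point `s` and the first `t` points. -/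
noncomputable def kvec {S : Type*} (k : S → S → ℝ) {T : ℕ} (x : Fin T → S)
    (t : ℕ) (ht : t ≤ T) (s : S) : Fin t → ℝ :=
  fun i => k s (x (Fin.castLE ht i))

/-- GP posterior covariance `c_t(s,s') = k(s,s') − k_t(s)ᵀ(K_t+σ²I)⁻¹k_t(s')` after
conditioning on the first `t` points. -/
noncomputable def postCov {S : Type*} (k : S → S → ℝ) (σ : ℝ) {T : ℕ} (x : Fin T → S)
    (t : ℕ) (ht : t ≤ T) (s s' : S) : ℝ :=
  k s s' - kvec k x t ht s ⬝ᵥ ((gramReg k σ x t ht)⁻¹ *ᵥ kvec k x t ht s')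

/-- GP posterior variance `σ_t²(s) = k(s,s) − k_t(s)ᵀ(K_t+σ²I)⁻¹k_t(s)` after
conditioning on the first `t` points (so `σ_0²(s) = k(s,s)`). -/
noncomputable def postVar {S : Type*} (k : S → S → ℝ) (σ : ℝ) {T : ℕ} (x : Fin T → S)
    (t : ℕ) (ht : t ≤ T) (s : S) : ℝ :=
  postCov k σ x t ht s s

theorem Matrix.det_succ_eq_det_mul_schur {R : Type*} [Field R] {t : ℕ}
    (M : Matrix (Fin (t + 1)) (Fin (t + 1)) R)
    (hA : IsUnit (M.submatrix Fin.castSucc Fin.castSucc).det) :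
    M.det = (M.submatrix Fin.castSucc Fin.castSucc).det *
      (M (Fin.last t) (Fin.last t) - (fun j => M (Fin.last t) j.castSucc) ⬝ᵥ
        ((M.submatrix Fin.castSucc Fin.castSucc)⁻¹ *ᵥ fun i => M i.castSucc (Fin.last t))) := by
  let N := M.submatrix finSumFinEquiv finSumFinEquiv
  have hN : N.toBlocks₁₁ = M.submatrix Fin.castSucc Fin.castSucc := rfl
  have := N.toBlocks₁₁.invertibleOfIsUnitDet hA
  calc M.det = N.det := (det_submatrix_equiv_self finSumFinEquiv M).symm
    _ = (fromBlocks N.toBlocks₁₁ N.toBlocks₁₂ N.toBlocks₂₁ N.toBlocks₂₂).det := by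
      rw [fromBlocks_toBlocks]
    _ = _ := by
      rw [det_fromBlocks₁₁, det_fin_one, invOf_eq_nonsing_inv, hN]
      congr 1
      have hlast : Fin.natAdd t (0 : Fin 1) = Fin.last t := rfl
      simp only [N, toBlocks₁₂, toBlocks₂₁, toBlocks₂₂, sub_apply, of_apply, submatrix_apply,
        finSumFinEquiv_apply_left, finSumFinEquiv_apply_right, hlast, mul_apply, dotProduct, mulVec,
        Finset.mul_sum, Finset.sum_mul, mul_assoc]
      rw [Finset.sum_comm]
      rfl

section GaussianProcess

variable {S : Type*} {k : S → S → ℝ} {σ : ℝ} {T : ℕ} (x : Fin T → S)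

lemma IsPSDKernel.posDef_gramReg (hk : IsPSDKernel k) (hσ : 0 < σ) (t : ℕ) (ht : t ≤ T) :
    (gramReg k σ x t ht).PosDef :=
  PosDef.posSemidef_add (hk.2 t _) (PosDef.one.smul (by positivity))

lemma gramReg_submatrix_castSucc (t : ℕ) (ht : t + 1 ≤ T) :
    (gramReg k σ x (t + 1) ht).submatrix Fin.castSucc Fin.castSucc
      = gramReg k σ x t (Nat.le_of_succ_le ht) := by
  simp only [gramReg, submatrix_add, submatrix_smul, Pi.add_apply, Pi.smul_apply,
    submatrix_one _ (Fin.castSucc_injective t)]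
  rfl

lemma IsPSDKernel.det_gramReg_succ (hk : IsPSDKernel k) (hσ : 0 < σ) (t : ℕ) (ht : t + 1 ≤ T) :
    (gramReg k σ x (t + 1) ht).det = (gramReg k σ x t (Nat.le_of_succ_le ht)).det *
      (σ ^ 2 + postVar k σ x t (Nat.le_of_succ_le ht) (x (Fin.castLE ht (Fin.last t)))) := by
  set s := x (Fin.castLE ht (Fin.last t)) with hs
  have hA := (hk.posDef_gramReg x hσ t (Nat.le_of_succ_le ht)).isUnit
  rw [← gramReg_submatrix_castSucc x t ht, isUnit_iff_isUnit_det] at hA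
  have hcorner : gramReg k σ x (t + 1) ht (Fin.last t) (Fin.last t) = k s s + σ ^ 2 := by
    simp [hs, gramReg]
  have hrow : (fun j => gramReg k σ x (t + 1) ht (Fin.last t) j.castSucc)
      = kvec k x t (Nat.le_of_succ_le ht) s := by
    ext j
    simp [hs, gramReg, kvec, (Fin.castSucc_ne_last j).symm]
  have hcol : (fun i => gramReg k σ x (t + 1) ht i.castSucc (Fin.last t))
      = kvec k x t (Nat.le_of_succ_le ht) s := by
    ext i
    simpa [hs, gramReg, kvec, Fin.castSucc_ne_last i] using hk.1 _ s
  rw [det_succ_eq_det_mul_schur _ hA, hcorner, hrow, hcol, gramReg_submatrix_castSucc, postVar,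
    postCov]
  ring

lemma IsPSDKernel.det_gramReg (hk : IsPSDKernel k) (hσ : 0 < σ) (t : ℕ) (ht : t ≤ T) :
    (gramReg k σ x t ht).det
      = ∏ i : Fin t, (σ ^ 2 + postVar k σ x i (i.isLt.le.trans ht) (x (Fin.castLE ht i))) := by
  induction t with
  | zero => simp [gramReg]
  | succ t ih =>
    rw [hk.det_gramReg_succ x hσ t ht, ih, Fin.prod_univ_castSucc]
    rfl

end GaussianProcess

/-- The determinant of the regularized Gram matrix factors over the
sequential posterior variances:
`det(I_T + σ⁻² K_T) = Π_{t=1}^T (1 + σ⁻² σ_{t−1}²(x_t))`. -/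
theorem stmt11 {S : Type*} (k : S → S → ℝ) (hk : IsPSDKernel k)
    (σ : ℝ) (hσ : 0 < σ) (T : ℕ) (x : Fin T → S) :
    ((1 : Matrix (Fin T) (Fin T) ℝ) + (σ ^ 2)⁻¹ • Matrix.of fun i j => k (x i) (x j)).det
      = ∏ i : Fin T, (1 + (σ ^ 2)⁻¹ * postVar k σ x i.val i.isLt.le (x i)) := by
  have hσ2 : σ ^ 2 ≠ 0 := by positivity
  have hscale : (1 : Matrix (Fin T) (Fin T) ℝ) + (σ ^ 2)⁻¹ • Matrix.of (fun i j => k (x i) (x j))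
      = (σ ^ 2)⁻¹ • gramReg k σ x T le_rfl := by
    rw [gramReg, smul_add, smul_smul, inv_mul_cancel₀ hσ2, one_smul, add_comm]
    rfl
  rw [hscale, det_smul, hk.det_gramReg x hσ T le_rfl, Fintype.card_fin,
    ← Fin.prod_const T (σ ^ 2)⁻¹, ← Finset.prod_mul_distrib]
  refine Finset.prod_congr rfl fun i _ => ?_
  rw [mul_add, inv_mul_cancel₀ hσ2]
  rfl
end

section
/- Let k be a positive semidefinite kernel on a set S with k(x,x) ≤ 1 for all x ∈ S, let x_1, …, x_T ∈ S and σ > 0, and define the GP posterior variance σ_t²(s) for 0 ≤ t ≤ T as in the context. Then the cumulative predictive variance is bounded by a constant multiple of the information gain: Σ_{t=1}^{T} σ_{t−1}²(x_t) ≤ (1 + σ²) · log det( I_T + σ^{−2} K_T ), i.e., Σ_{t=1}^{T} σ_{t−1}²(x_t) ≤ C_σ · γ_T with C_σ = 2(1 + σ²) and γ_T = (1/2)·log det(I_T + σ^{−2} K_T). -/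
open Matrix

/-!
By the Schur complement, `det (K_{t+1} + σ² I) = det (K_t + σ² I) · (σ² + σ_t²(x_{t+1}))`, so
`log det (I + σ⁻² K_T) = ∑_t log (1 + σ_{t-1}²(x_t) / σ²)`. Each posterior variance lies in
`[0, 1]` (nonnegative as a Schur complement of a PSD matrix, at most `k(s,s) ≤ 1`), and on that
interval `z ≤ (1 + σ²) · log (1 + z / σ²)` since `log (1 + u) ≥ u / (1 + u)`.
-/

namespace Matrix

variable {ι : Type*} [Fintype ι] [DecidableEq ι]

omit [DecidableEq ι] in
theorem replicateRow_mul_mul_replicateCol (A : Matrix ι ι ℝ) (v : ι → ℝ) :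
    replicateRow (Fin 1) v * A * replicateCol (Fin 1) v = of fun _ _ => v ⬝ᵥ (A *ᵥ v) := by
  rw [← replicateRow_vecMul, replicateRow_mul_replicateCol, dotProduct_mulVec]

theorem det_fromBlocks_replicateCol {A : Matrix ι ι ℝ} (hA : IsUnit A) (v : ι → ℝ) (d : ℝ) :
    (fromBlocks A (replicateCol (Fin 1) v) (replicateRow (Fin 1) v) (of fun _ _ => d)).det
      = A.det * (d - v ⬝ᵥ (A⁻¹ *ᵥ v)) := by
  have := hA.invertible
  rw [det_fromBlocks₁₁, invOf_eq_nonsing_inv, replicateRow_mul_mul_replicateCol, det_fin_one]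
  rfl

theorem PosDef.sub_dotProduct_inv_mulVec_nonneg {A : Matrix ι ι ℝ} (hA : A.PosDef)
    {v : ι → ℝ} {d : ℝ}
    (h : (fromBlocks A (replicateCol (Fin 1) v) (replicateRow (Fin 1) v)
      (of fun _ _ => d)).PosSemidef) :
    0 ≤ d - v ⬝ᵥ (A⁻¹ *ᵥ v) := by
  have := hA.isUnit.invertible
  have hB : replicateRow (Fin 1) v = (replicateCol (Fin 1) v)ᴴ := by simp
  rw [hB, hA.fromBlocks₁₁, ← hB, replicateRow_mul_mul_replicateCol] at h
  simpa using h.diag_nonneg (i := 0)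

end Matrix

section KernelGram

variable {S : Type*} {k : S → S → ℝ} {ι : Type*}

def kernelGram (k : S → S → ℝ) (y : ι → S) : Matrix ι ι ℝ :=
  of fun i j => k (y i) (y j)

noncomputable def gpVariance (k : S → S → ℝ) (σ : ℝ) [Fintype ι] [DecidableEq ι] (y : ι → S)
    (s : S) : ℝ :=
  k s s - (fun i => k s (y i)) ⬝ᵥ ((kernelGram k y + σ ^ 2 • 1)⁻¹ *ᵥ fun i => k s (y i))

theorem postVar_eq_gpVariance (σ : ℝ) {T : ℕ} (x : Fin T → S) (t : ℕ) (ht : t ≤ T) (s : S) :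
    postVar k σ x t ht s = gpVariance k σ (fun i : Fin t => x (Fin.castLE ht i)) s :=
  rfl

theorem kernelGram_comp {κ : Type*} (y : ι → S) (e : κ → ι) :
    kernelGram k (y ∘ e) = (kernelGram k y).submatrix e e :=
  rfl

namespace IsPSDKernel

theorem posSemidef_kernelGram [Fintype ι] (hk : IsPSDKernel k) (y : ι → S) :
    (kernelGram k y).PosSemidef :=
  (posSemidef_submatrix_equiv (Fintype.equivFin ι).symm).1
    (hk.2 _ (y ∘ (Fintype.equivFin ι).symm))

theorem posDef_kernelGram_add_smul_one [Fintype ι] [DecidableEq ι] (hk : IsPSDKernel k)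
    {σ : ℝ} (hσ : σ ≠ 0) (y : ι → S) :
    (kernelGram k y + σ ^ 2 • 1).PosDef :=
  (PosDef.one.smul (by positivity)).posSemidef_add (hk.posSemidef_kernelGram y)

theorem kernelGram_sumElim (hk : IsPSDKernel k) (y : ι → S) (s : S) :
    kernelGram k (Sum.elim y fun _ : Fin 1 => s)
      = fromBlocks (kernelGram k y) (replicateCol (Fin 1) fun i => k s (y i))
          (replicateRow (Fin 1) fun i => k s (y i)) (of fun _ _ => k s s) := by
  ext (i | i) (j | j)
  · rfl
  · exact hk.1 _ _
  · rfl
  · rfl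

variable [Fintype ι] [DecidableEq ι] {σ : ℝ}

theorem gpVariance_nonneg (hk : IsPSDKernel k) (hσ : σ ≠ 0) (y : ι → S) (s : S) :
    0 ≤ gpVariance k σ y s := by
  -- the variance is the Schur complement of the Gram matrix of `y, s` with `σ²` added on the
  -- diagonal of the `y`-block only
  have hreg : (fromBlocks (σ ^ 2 • 1 : Matrix ι ι ℝ) 0 0
      (0 : Matrix (Fin 1) (Fin 1) ℝ)).PosSemidef := by
    rw [smul_one_eq_diagonal, ← diagonal_zero, fromBlocks_diagonal]
    exact posSemidef_diagonal_iff.2 fun i => by rcases i with _ | _ <;> simp [sq_nonneg]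
  have h := (hk.posSemidef_kernelGram (Sum.elim y fun _ : Fin 1 => s)).add hreg
  rw [hk.kernelGram_sumElim, fromBlocks_add] at h
  simp only [add_zero] at h
  exact (hk.posDef_kernelGram_add_smul_one hσ y).sub_dotProduct_inv_mulVec_nonneg h

theorem gpVariance_le (hk : IsPSDKernel k) (hσ : σ ≠ 0) (y : ι → S) (s : S) :
    gpVariance k σ y s ≤ k s s :=
  sub_le_self _ <| by
    simpa using (hk.posDef_kernelGram_add_smul_one hσ y).inv.posSemidef.dotProduct_mulVec_nonneg
      fun i => k s (y i)

theorem det_kernelGram_sumElim_add_smul_one (hk : IsPSDKernel k) (hσ : σ ≠ 0) (y : ι → S)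
    (s : S) :
    (kernelGram k (Sum.elim y fun _ : Fin 1 => s) + σ ^ 2 • 1).det
      = (kernelGram k y + σ ^ 2 • 1).det * (σ ^ 2 + gpVariance k σ y s) := by
  have hcorner : (of fun _ _ => k s s : Matrix (Fin 1) (Fin 1) ℝ) + σ ^ 2 • 1
      = of fun _ _ => k s s + σ ^ 2 := by
    ext i j
    simp [Subsingleton.elim i j]
  rw [hk.kernelGram_sumElim, ← fromBlocks_one, fromBlocks_smul, fromBlocks_add]
  simp only [smul_zero, add_zero]
  rw [hcorner, det_fromBlocks_replicateCol (hk.posDef_kernelGram_add_smul_one hσ y).isUnit,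
    gpVariance]
  ring

theorem det_kernelGram_add_smul_one_succ (hk : IsPSDKernel k) (hσ : σ ≠ 0) {n : ℕ}
    (y : Fin (n + 1) → S) :
    (kernelGram k y + σ ^ 2 • 1).det
      = (kernelGram k (y ∘ Fin.castSucc) + σ ^ 2 • 1).det
          * (σ ^ 2 + gpVariance k σ (y ∘ Fin.castSucc) (y (Fin.last n))) := by
  have hsplit :
      y ∘ finSumFinEquiv = Sum.elim (y ∘ Fin.castSucc) fun _ : Fin 1 => y (Fin.last n) := by
    ext (i | i)
    · rfl
    · rw [Subsingleton.elim i 0]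
      rfl
  have hreindex : (kernelGram k y + σ ^ 2 • 1).submatrix finSumFinEquiv finSumFinEquiv
      = kernelGram k (y ∘ finSumFinEquiv) + σ ^ 2 • 1 := by
    simp only [submatrix_add, submatrix_smul, Pi.add_apply, Pi.smul_apply, submatrix_one_equiv,
      kernelGram_comp]
  rw [← det_submatrix_equiv_self finSumFinEquiv, hreindex, hsplit,
    hk.det_kernelGram_sumElim_add_smul_one hσ]

theorem det_kernelGram_add_smul_one_eq_prod (hk : IsPSDKernel k) (hσ : σ ≠ 0) :
    ∀ {n : ℕ} (y : Fin n → S), (kernelGram k y + σ ^ 2 • 1).det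
      = ∏ i : Fin n, (σ ^ 2 + gpVariance k σ (fun j : Fin i => y (Fin.castLE i.isLt.le j)) (y i))
  | 0, y => by simp
  | n + 1, y => by
    rw [hk.det_kernelGram_add_smul_one_succ hσ, det_kernelGram_add_smul_one_eq_prod hk hσ,
      Fin.prod_univ_castSucc]
    rfl

theorem det_one_add_inv_smul_kernelGram_eq_prod (hk : IsPSDKernel k) (hσ : σ ≠ 0) {n : ℕ}
    (y : Fin n → S) :
    (1 + (σ ^ 2)⁻¹ • kernelGram k y).det
      = ∏ i : Fin n,
          (1 + gpVariance k σ (fun j : Fin i => y (Fin.castLE i.isLt.le j)) (y i) / σ ^ 2) := by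
  have hσ2 : σ ^ 2 ≠ 0 := pow_ne_zero 2 hσ
  have hfactor : 1 + (σ ^ 2)⁻¹ • kernelGram k y = (σ ^ 2)⁻¹ • (kernelGram k y + σ ^ 2 • 1) := by
    rw [smul_add, smul_smul, inv_mul_cancel₀ hσ2, one_smul, add_comm]
  rw [hfactor, det_smul, hk.det_kernelGram_add_smul_one_eq_prod hσ, Fintype.card_fin,
    ← Fin.prod_const, ← Finset.prod_mul_distrib]
  refine Finset.prod_congr rfl fun i _ => ?_
  field_simp

end IsPSDKernel

end KernelGram

theorem le_one_add_mul_log_one_add_div {c z : ℝ} (hc : 0 < c) (hz₀ : 0 ≤ z) (hz₁ : z ≤ 1) :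
    z ≤ (1 + c) * Real.log (1 + z / c) := by
  have hlog : z / (c + z) ≤ Real.log (1 + z / c) := by
    have h := Real.one_sub_inv_le_log_of_pos (x := 1 + z / c) (by positivity)
    have hrw : 1 - (1 + z / c)⁻¹ = z / (c + z) := by
      field_simp
      ring
    rwa [hrw] at h
  calc z ≤ (1 + c) * (z / (c + z)) := by
        rw [mul_div_assoc', le_div_iff₀ (by positivity)]
        nlinarith
    _ ≤ (1 + c) * Real.log (1 + z / c) := by gcongr

/-- Variance–information gain lemma: if `k(x,x) ≤ 1` for all `x`, then
`Σ_{t=1}^T σ_{t−1}²(x_t) ≤ (1 + σ²)·log det(I_T + σ⁻² K_T)`, i.e. the cumulative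
predictive variance is at most `C_σ · γ_T` with `C_σ = 2(1 + σ²)` and
`γ_T = (1/2)·log det(I_T + σ⁻² K_T)`. -/
theorem stmt12 {S : Type*} (k : S → S → ℝ) (hk : IsPSDKernel k)
    (hk1 : ∀ x : S, k x x ≤ 1)
    (σ : ℝ) (hσ : 0 < σ) (T : ℕ) (x : Fin T → S) :
    ∑ i : Fin T, postVar k σ x i.val i.isLt.le (x i)
      ≤ (1 + σ ^ 2) *
        Real.log
          ((1 : Matrix (Fin T) (Fin T) ℝ)
            + (σ ^ 2)⁻¹ • Matrix.of fun i j => k (x i) (x j)).det ∧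
    ∑ i : Fin T, postVar k σ x i.val i.isLt.le (x i)
      ≤ (2 * (1 + σ ^ 2)) *
        ((1 / 2) *
          Real.log
            ((1 : Matrix (Fin T) (Fin T) ℝ)
              + (σ ^ 2)⁻¹ • Matrix.of fun i j => k (x i) (x j)).det) := by
  have hσ0 : σ ≠ 0 := hσ.ne'
  have hvar (i : Fin T) :=
    hk.gpVariance_nonneg hσ0 (fun j : Fin i => x (Fin.castLE i.isLt.le j)) (x i)
  have hsum : ∑ i : Fin T, postVar k σ x i.val i.isLt.le (x i)
      ≤ (1 + σ ^ 2) * Real.log (1 + (σ ^ 2)⁻¹ • of fun i j => k (x i) (x j)).det := by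
    simp only [postVar_eq_gpVariance]
    rw [show (of fun i j => k (x i) (x j)) = kernelGram k x from rfl,
      hk.det_one_add_inv_smul_kernelGram_eq_prod hσ0,
      Real.log_prod fun i _ => (add_pos_of_pos_of_nonneg one_pos (div_nonneg (hvar i)
        (sq_nonneg σ))).ne',
      Finset.mul_sum]
    exact Finset.sum_le_sum fun i _ => le_one_add_mul_log_one_add_div (by positivity)
      (hvar i) ((hk.gpVariance_le hσ0 _ _).trans (hk1 _))
  exact ⟨hsum, hsum.trans_eq (by ring)⟩
end

section
/- Let T and d be positive natural numbers, σ > 0 a real number, and X a T × d real matrix each of whose rows has Euclidean norm at most 1. Then (1/2)·log det( I_T + σ^{−2} X Xᵀ ) ≤ (d/2) · log( 1 + T/(σ²·d) ). -/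
/-!
The Weinstein–Aronszajn identity turns `det (I_T + σ⁻² X Xᵀ)` into `det (I_d + σ⁻² Xᵀ X)`.
The eigenvalues of this positive definite `d × d` matrix sum to its trace
`d + σ⁻² ∑ᵢ ‖xᵢ‖² ≤ d + σ⁻² T`, so by AM–GM their product is at most `(1 + T / (σ² d)) ^ d`.
-/

open Matrix Finset

theorem Real.prod_le_arith_mean_pow {ι : Type*} (s : Finset ι) {z : ι → ℝ}
    (hz : ∀ i ∈ s, 0 ≤ z i) :
    ∏ i ∈ s, z i ≤ ((∑ i ∈ s, z i) / #s) ^ #s := by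
  rcases s.eq_empty_or_nonempty with rfl | hs
  · simp
  have hcard : (0 : ℝ) < #s := by exact_mod_cast hs.card_pos
  have hmean := Real.geom_mean_le_arith_mean s (fun _ ↦ 1) z (fun _ _ ↦ zero_le_one)
    (by simpa using hcard) hz
  simp only [Real.rpow_one, one_mul, sum_const, nsmul_eq_mul, mul_one] at hmean
  have hprod : 0 ≤ ∏ i ∈ s, z i := prod_nonneg hz
  calc ∏ i ∈ s, z i = ((∏ i ∈ s, z i) ^ (#s : ℝ)⁻¹) ^ (#s : ℝ) := by
        rw [← Real.rpow_mul hprod, inv_mul_cancel₀ hcard.ne', Real.rpow_one]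
    _ ≤ ((∑ i ∈ s, z i) / #s) ^ (#s : ℝ) := by gcongr
    _ = ((∑ i ∈ s, z i) / #s) ^ #s := Real.rpow_natCast _ _

namespace Matrix

variable {m n : Type*} [Fintype m] [Fintype n]

theorem PosSemidef.det_le_trace_div_card_pow [DecidableEq n] {A : Matrix n n ℝ}
    (hA : A.PosSemidef) :
    A.det ≤ (A.trace / Fintype.card n) ^ Fintype.card n := by
  rw [hA.isHermitian.det_eq_prod_eigenvalues, hA.isHermitian.trace_eq_sum_eigenvalues]
  simpa using Real.prod_le_arith_mean_pow univ fun i _ ↦ hA.eigenvalues_nonneg i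

theorem det_one_add_smul_mul_comm [DecidableEq m] [DecidableEq n] {R : Type*} [CommRing R]
    (c : R) (A : Matrix m n R) (B : Matrix n m R) :
    (1 + c • (A * B)).det = (1 + c • (B * A)).det := by
  rw [← Matrix.mul_smul, det_one_add_mul_comm, Matrix.smul_mul]

theorem trace_transpose_mul_self (X : Matrix m n ℝ) :
    (Xᵀ * X).trace = ∑ i, ∑ j, X i j ^ 2 := by
  simp only [trace, diag, mul_apply, transpose_apply, sq]
  exact sum_comm

theorem posDef_one_add_smul_transpose_mul_self [DecidableEq n] {c : ℝ} (hc : 0 ≤ c)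
    (X : Matrix m n ℝ) :
    (1 + c • (Xᵀ * X)).PosDef :=
  PosDef.one.add_posSemidef <| by
    simpa using (posSemidef_conjTranspose_mul_self X).smul hc

end Matrix

theorem stmt14_general (T d : ℕ) (hd : 0 < d) (σ : ℝ)
    (X : Matrix (Fin T) (Fin d) ℝ)
    (hrows : ∀ i : Fin T, Real.sqrt (∑ j : Fin d, X i j ^ 2) ≤ 1) :
    (1 / 2) * Real.log ((1 + (σ ^ 2)⁻¹ • (X * Xᵀ)).det)
      ≤ ((d : ℝ) / 2) * Real.log (1 + (T : ℝ) / (σ ^ 2 * d)) := by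
  have hc : 0 ≤ (σ ^ 2)⁻¹ := by positivity
  have hM := posDef_one_add_smul_transpose_mul_self hc X
  have htrace : (Xᵀ * X).trace ≤ T := by
    rw [trace_transpose_mul_self]
    simpa using sum_le_sum fun i (_ : i ∈ univ) ↦ Real.sqrt_le_one.mp (hrows i)
  have hmean : (1 + (σ ^ 2)⁻¹ • (Xᵀ * X)).trace / d ≤ 1 + T / (σ ^ 2 * d) := by
    rw [trace_add, trace_smul, trace_one, Fintype.card_fin, smul_eq_mul, add_div,
      div_self (by positivity), show (T : ℝ) / (σ ^ 2 * d) = (σ ^ 2)⁻¹ * T / d by ring]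
    gcongr
  have hdet : (1 + (σ ^ 2)⁻¹ • (Xᵀ * X)).det ≤ (1 + T / (σ ^ 2 * d)) ^ d := by
    refine hM.posSemidef.det_le_trace_div_card_pow.trans ?_
    rw [Fintype.card_fin]
    exact pow_le_pow_left₀ (div_nonneg hM.posSemidef.trace_nonneg d.cast_nonneg) hmean d
  rw [det_one_add_smul_mul_comm]
  calc (1 / 2) * Real.log (1 + (σ ^ 2)⁻¹ • (Xᵀ * X)).det
      ≤ (1 / 2) * Real.log ((1 + T / (σ ^ 2 * d)) ^ d) := by gcongr; exact hM.det_pos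
    _ = _ := by rw [Real.log_pow]; ring

/-- Information-gain bound for the linear kernel: if each row of the
`T × d` matrix `X` has Euclidean norm at most `1`, then
`(1/2)·log det(I_T + σ⁻² X Xᵀ) ≤ (d/2)·log(1 + T/(σ² d))`. -/
theorem stmt14 (T d : ℕ) (hT : 0 < T) (hd : 0 < d) (σ : ℝ) (hσ : 0 < σ)
    (X : Matrix (Fin T) (Fin d) ℝ)
    (hrows : ∀ i : Fin T, Real.sqrt (∑ j : Fin d, X i j ^ 2) ≤ 1) :
    (1 / 2) * Real.log ((1 + (σ ^ 2)⁻¹ • (X * Xᵀ)).det)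
      ≤ ((d : ℝ) / 2) * Real.log (1 + (T : ℝ) / (σ ^ 2 * d)) :=
  stmt14_general T d hd σ X hrows
end
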